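/- arXiv:1609.03686 — 4 statements merged into one kernel-verified Lean document; each statement's English description precedes it below -/
import Mathlib

section
/- With the setup of the nearest-neighbor indicator a and random permutation π on N = 2n points, define D₁₂ = Σ_{i,j} a(i,j)·1[π(i) ∈ {1,...,n}]·1[π(j) ∈ {n+1,...,N}], let 2C₁ = Σ_{i,j} a(i,j)a(j,i) (twice the number of mutual nearest-neighbor pairs) and 2C₂ = Σ_{i,l,j: i≠l} a(i,j)a(l,j) (twice the number of pairs sharing a nearest neighbor). Then E(D₁₂²) = N²/(4(N−1)) + (N/(8(N−1)))·2C₂ + (N(N−2)/(16(N−1)(N−3)))·(N² − 3N + 2C₁ − 2C₂). -/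
/-!
Write `a i j = [j = f i]` with `f` free of fixed points, and let `A = {x < n}`, `B = {x ≥ n}`.
Then `D₁₂(σ)` counts the `i` with `σ i ∈ A` and `σ (f i) ∈ B`, so `∑_σ D₁₂(σ)²` is a sum over
pairs `(i, k)` of the number of `σ` sending `{i, k}` into `A` and `{f i, f k}` into `B`. Since
`Perm α` acts transitively on the embeddings of any finite type into `α`, this number depends
only on the sizes `p, q` of the two sets: it is `N! (n)_p (n)_q / (N)_(p+q)` when they are
disjoint and `0` otherwise. The `N` pairs with `i = k` have `p = q = 1`, the `2C₂` pairs with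
`i ≠ k`, `f i = f k` have `p = 2, q = 1`, the `2N - 2C₁` pairs with `f i = k` or `f k = i` give
meeting sets, and the remaining `N² - 3N + 2C₁ - 2C₂` pairs have `p = q = 2`.
-/

open Finset
open scoped Nat

namespace MulAction

variable {G X M : Type*} [Group G] [Fintype G] [MulAction G X] [Fintype X] [IsPretransitive G X]
  [AddCommMonoid M]

theorem card_nsmul_sum_comp_smul (Φ : X → M) (x : X) :
    Fintype.card X • ∑ g : G, Φ (g • x) = Fintype.card G • ∑ y, Φ y := by
  have hconst (y : X) : ∑ g : G, Φ (g • y) = ∑ g : G, Φ (g • x) := by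
    obtain ⟨h, rfl⟩ := exists_smul_eq G x y
    simpa only [Equiv.coe_mulRight, mul_smul] using
      Equiv.sum_comp (Equiv.mulRight h) (fun g => Φ (g • x))
  calc Fintype.card X • ∑ g : G, Φ (g • x) = ∑ y, ∑ g : G, Φ (g • y) := by
        simp only [hconst, sum_const, Finset.card_univ]
    _ = ∑ g : G, ∑ y, Φ (g • y) := sum_comm
    _ = ∑ _g : G, ∑ y, Φ y := sum_congr rfl fun g _ => Equiv.sum_comp (toPerm g) Φ
    _ = Fintype.card G • ∑ y, Φ y := by rw [sum_const, Finset.card_univ]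

end MulAction

section MapsToProb

variable {α : Type*} [Fintype α]

noncomputable def mapsToProb (A B : Finset α) (p q : ℕ) : ℝ :=
  (#A).descFactorial p * (#B).descFactorial q / (Fintype.card α).descFactorial (p + q)

theorem mapsToProb_of_two_mul_card_eq {A B : Finset α} (hA : 2 * #A = Fintype.card α)
    (hB : #B = #A) (hα : 4 ≤ Fintype.card α) :
    mapsToProb A B 1 1 = Fintype.card α / (4 * (Fintype.card α - 1)) ∧
      mapsToProb A B 2 1 = Fintype.card α / (8 * (Fintype.card α - 1)) ∧
      mapsToProb A B 2 2 = Fintype.card α * (Fintype.card α - 2) /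
        (16 * (Fintype.card α - 1) * (Fintype.card α - 3)) := by
  have hdesc (k : ℕ) (hk : k ≤ Fintype.card α) : ((Fintype.card α).descFactorial (k + 1) : ℝ) =
      (Fintype.card α - k) * (Fintype.card α).descFactorial k := by
    rw [Nat.descFactorial_succ, Nat.cast_mul, Nat.cast_sub hk]
  have hAr : (#A : ℝ) = Fintype.card α / 2 := by
    rw [← hA]
    push_cast
    ring
  have hα' : (4 : ℝ) ≤ Fintype.card α := by exact_mod_cast hα
  have h0 : (Fintype.card α : ℝ) ≠ 0 := by linarith
  have h1 : (Fintype.card α : ℝ) - 1 ≠ 0 := by linarith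
  have h2 : (Fintype.card α : ℝ) - 2 ≠ 0 := by linarith
  have h3 : (Fintype.card α : ℝ) - 3 ≠ 0 := by linarith
  simp only [mapsToProb, hB, hdesc 3 (by omega), hdesc 2 (by omega), hdesc 1 (by omega),
    Nat.cast_descFactorial_two, Nat.descFactorial_one, hAr]
  push_cast
  refine ⟨?_, ?_, ?_⟩ <;> field_simp <;> ring

end MapsToProb

section PermCount

variable {α : Type*} [Fintype α] [DecidableEq α]

theorem card_embedding_sum_mapsTo {ι κ : Type*} [Fintype ι] [Fintype κ] {A B : Finset α}
    (hAB : Disjoint A B) :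
    Fintype.card {y : ι ⊕ κ ↪ α // (∀ i, y (.inl i) ∈ A) ∧ ∀ k, y (.inr k) ∈ B} =
      (#A).descFactorial (Fintype.card ι) * (#B).descFactorial (Fintype.card κ) := by
  have e : {y : ι ⊕ κ ↪ α // (∀ i, y (.inl i) ∈ A) ∧ ∀ k, y (.inr k) ∈ B} ≃ (ι ↪ A) × (κ ↪ B) :=
    { toFun := fun y => (⟨fun i => ⟨y.1 (.inl i), y.2.1 i⟩, fun i j h => by
          simpa using y.1.injective (Subtype.ext_iff.mp h)⟩,
        ⟨fun k => ⟨y.1 (.inr k), y.2.2 k⟩, fun i j h => by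
          simpa using y.1.injective (Subtype.ext_iff.mp h)⟩)
      invFun := fun u => ⟨⟨Sum.elim (fun i => (u.1 i : α)) (fun k => (u.2 k : α)),
          (Subtype.val_injective.comp u.1.injective).sumElim
            (Subtype.val_injective.comp u.2.injective)
            fun i k h => disjoint_left.mp hAB (u.1 i).2 ((congrArg (· ∈ B) h).mpr (u.2 k).2)⟩,
          fun i => (u.1 i).2, fun k => (u.2 k).2⟩
      left_inv := fun y => by ext (i | k) <;> rfl
      right_inv := fun u => rfl }
  rw [Fintype.card_congr e, Fintype.card_prod, Fintype.card_embedding_eq,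
    Fintype.card_embedding_eq, Fintype.card_coe, Fintype.card_coe]

theorem card_filter_perm_mapsTo_mul {A B X Y : Finset α} (hAB : Disjoint A B)
    (hXY : Disjoint X Y) :
    (Fintype.card α).descFactorial (#X + #Y) *
        #{σ : Equiv.Perm α | (∀ x ∈ X, σ x ∈ A) ∧ ∀ y ∈ Y, σ y ∈ B} =
      (Fintype.card α)! * ((#A).descFactorial #X * (#B).descFactorial #Y) := by
  let e : X ⊕ Y ↪ α := ⟨Sum.elim Subtype.val Subtype.val,
    Subtype.val_injective.sumElim Subtype.val_injective
      fun x y h => disjoint_left.mp hXY x.2 (h ▸ y.2)⟩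
  have : MulAction.IsPretransitive (Equiv.Perm α) (X ⊕ Y ↪ α) :=
    ⟨Equiv.Perm.exists_smul_eq_embedding⟩
  have key := MulAction.card_nsmul_sum_comp_smul (G := Equiv.Perm α)
    (fun y : X ⊕ Y ↪ α => if (∀ i, y (.inl i) ∈ A) ∧ ∀ k, y (.inr k) ∈ B then 1 else 0) e
  simp only [sum_boole, ← Fintype.card_subtype, card_embedding_sum_mapsTo hAB,
    Fintype.card_embedding_eq, Fintype.card_sum, Fintype.card_coe, Fintype.card_perm,
    smul_eq_mul, Nat.cast_id] at key
  rw [← key, Fintype.card_subtype]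
  simp [e]

theorem card_filter_perm_mapsTo {A B : Finset α} (hAB : Disjoint A B) (X Y : Finset α) :
    (#{σ : Equiv.Perm α | (∀ x ∈ X, σ x ∈ A) ∧ ∀ y ∈ Y, σ y ∈ B} : ℝ) =
      if Disjoint X Y then (Fintype.card α)! * mapsToProb A B #X #Y else 0 := by
  split_ifs with hXY
  · have hpos : (Fintype.card α).descFactorial (#X + #Y) ≠ 0 := by
      rw [Ne, Nat.descFactorial_eq_zero_iff_lt, not_lt, ← card_union_of_disjoint hXY]
      exact card_le_univ _
    rw [mapsToProb, mul_div_assoc', eq_div_iff (by exact_mod_cast hpos), mul_comm]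
    exact_mod_cast card_filter_perm_mapsTo_mul hAB hXY
  · obtain ⟨x, hxX, hxY⟩ := not_disjoint_iff.mp hXY
    rw [Nat.cast_eq_zero, card_eq_zero, filter_eq_empty_iff]
    exact fun σ _ h => disjoint_left.mp hAB (h.1 x hxX) (h.2 x hxY)

end PermCount

theorem Fin.card_filter_le_val (n m : ℕ) : #{x : Fin n | m ≤ (x : ℕ)} = n - m := by
  have := card_filter_add_card_filter_not (s := univ) fun x : Fin n => (x : ℕ) < m
  simp only [not_lt, card_univ, Fintype.card_fin, Fin.card_filter_val_lt] at this
  omega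

section CrossCount

variable {α : Type*} [Fintype α] [DecidableEq α] {f : α → α}

def crossCount (A B : Finset α) (f : α → α) (σ : Equiv.Perm α) : ℝ :=
  ∑ i, if σ i ∈ A ∧ σ (f i) ∈ B then 1 else 0

-- Both count ordered pairs: they are `2 C₁` and `2 C₂`.
def mutualCount (f : α → α) : ℝ :=
  ∑ i, ∑ k, if f i = k ∧ f k = i then 1 else 0

def sharedCount (f : α → α) : ℝ :=
  ∑ i, ∑ k, if i ≠ k ∧ f i = f k then 1 else 0

theorem sum_perm_cross_mul_cross (hf : ∀ i, f i ≠ i) {A B : Finset α} (hAB : Disjoint A B)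
    (i k : α) :
    ∑ σ : Equiv.Perm α, (if σ i ∈ A ∧ σ (f i) ∈ B then 1 else 0) *
        (if σ k ∈ A ∧ σ (f k) ∈ B then (1 : ℝ) else 0) =
      (Fintype.card α)! * (if i = k then mapsToProb A B 1 1
        else if f i = f k then mapsToProb A B 2 1
        else if f i = k ∨ f k = i then 0 else mapsToProb A B 2 2) := by
  have hcount : ∑ σ : Equiv.Perm α, (if σ i ∈ A ∧ σ (f i) ∈ B then 1 else 0) *
      (if σ k ∈ A ∧ σ (f k) ∈ B then (1 : ℝ) else 0) =
      #{σ : Equiv.Perm α | (∀ x ∈ ({i, k} : Finset α), σ x ∈ A) ∧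
        ∀ y ∈ ({f i, f k} : Finset α), σ y ∈ B} := by
    rw [← sum_boole]
    refine sum_congr rfl fun σ _ => ?_
    rw [ite_zero_mul_ite_zero, one_mul]
    simp only [mem_insert, mem_singleton, forall_eq_or_imp, forall_eq]
    exact if_congr (by tauto) rfl rfl
  rw [hcount, card_filter_perm_mapsTo hAB]
  by_cases hik : i = k
  · subst hik
    simp [(hf i).symm]
  by_cases hfik : f i = f k
  · have hki : f k ≠ i := hfik ▸ hf i
    simp [hik, hfik, hf, hki]
  by_cases hcross : f i = k ∨ f k = i
  · have hmeet : ¬Disjoint ({i, k} : Finset α) {f i, f k} := by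
      rcases hcross with h | h <;> simp [h]
    simp [hik, hfik, hcross, hmeet]
  · rw [not_or] at hcross
    simp [hik, hfik, hf, hcross.1, hcross.2]

theorem sum_sum_ite_neighbor (hf : ∀ i, f i ≠ i) (u v w : ℝ) :
    ∑ i, ∑ k, (if i = k then u else if f i = f k then v
        else if f i = k ∨ f k = i then 0 else w) =
      Fintype.card α * u + sharedCount f * v +
        (Fintype.card α ^ 2 - 3 * Fintype.card α + mutualCount f - sharedCount f) * w := by
  -- inclusion–exclusion over the pair classes, which are disjoint as `f` has no fixed points
  have hsplit (i k : α) : (if i = k then u else if f i = f k then v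
      else if f i = k ∨ f k = i then 0 else w) =
      w + (if i = k then 1 else 0) * (u - w) + (if i ≠ k ∧ f i = f k then 1 else 0) * (v - w) -
        (if f i = k then 1 else 0) * w - (if f k = i then 1 else 0) * w +
        (if f i = k ∧ f k = i then 1 else 0) * w := by
    have := hf i
    have := hf k
    split_ifs <;> grind
  simp only [hsplit, sum_add_distrib, sum_sub_distrib, ← sum_mul, sum_const, card_univ,
    sum_ite_eq, mem_univ, if_true, mutualCount, sharedCount]
  rw [sum_comm (f := fun i k => if f k = i then (1 : ℝ) else 0)]
  simp only [sum_ite_eq, mem_univ, if_true, sum_const, card_univ, nsmul_eq_mul, mul_one]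
  ring

theorem sum_perm_crossCount_sq (hf : ∀ i, f i ≠ i) {A B : Finset α} (hAB : Disjoint A B) :
    ∑ σ : Equiv.Perm α, crossCount A B f σ ^ 2 =
      (Fintype.card α)! * (Fintype.card α * mapsToProb A B 1 1 +
        sharedCount f * mapsToProb A B 2 1 +
        (Fintype.card α ^ 2 - 3 * Fintype.card α + mutualCount f - sharedCount f) *
          mapsToProb A B 2 2) := by
  calc ∑ σ : Equiv.Perm α, crossCount A B f σ ^ 2
      = ∑ i, ∑ k, ∑ σ : Equiv.Perm α, (if σ i ∈ A ∧ σ (f i) ∈ B then 1 else 0) *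
          (if σ k ∈ A ∧ σ (f k) ∈ B then (1 : ℝ) else 0) := by
        simp only [crossCount, sq, sum_mul_sum]
        rw [sum_comm]
        exact sum_congr rfl fun i _ => sum_comm
    _ = _ := by
        simp only [sum_perm_cross_mul_cross hf hAB, ← mul_sum, sum_sum_ite_neighbor hf]

end CrossCount

theorem exists_eq_ite_of_sum_eq_one {ι : Type*} [Fintype ι] [DecidableEq ι] {v : ι → ℕ}
    (hv : ∑ k, v k = 1) : ∃ j, ∀ k, v k = if j = k then 1 else 0 := by
  obtain ⟨j, -, hj⟩ := exists_ne_zero_of_sum_ne_zero (hv ▸ one_ne_zero)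
  refine ⟨j, fun k => ?_⟩
  split_ifs with hjk
  · subst hjk
    have := single_le_sum (fun k _ => Nat.zero_le (v k)) (mem_univ j)
    omega
  · have := sum_le_sum_of_subset (f := v) (subset_univ {j, k})
    rw [sum_pair hjk, hv] at this
    omega

theorem stmt4_general (n : ℕ) (hn : 2 ≤ n) (a : Fin (2 * n) → Fin (2 * n) → ℕ)
    (hdiag : ∀ i, a i i = 0)
    (hrow : ∀ i, ∑ j, a i j = 1)
    (D : Equiv.Perm (Fin (2 * n)) → ℝ)
    (hD : ∀ σ, D σ = ∑ i, ∑ j, (a i j : ℝ) *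
      (if (σ i : ℕ) < n then 1 else 0) * (if n ≤ (σ j : ℕ) then 1 else 0))
    (N twoC1 twoC2 : ℝ)
    (hN : N = (2 * n : ℕ))
    (hC1 : twoC1 = ∑ i, ∑ j, (a i j : ℝ) * (a j i : ℝ))
    (hC2 : twoC2 = ∑ i, ∑ l, ∑ j, if i ≠ l then (a i j : ℝ) * (a l j : ℝ) else 0) :
    (∑ σ : Equiv.Perm (Fin (2 * n)), (D σ) ^ 2) /
      (Fintype.card (Equiv.Perm (Fin (2 * n))) : ℝ) =
    N ^ 2 / (4 * (N - 1)) + (N / (8 * (N - 1))) * twoC2 +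
      (N * (N - 2) / (16 * (N - 1) * (N - 3))) * (N ^ 2 - 3 * N + twoC1 - twoC2) := by
  choose f hf using fun i => exists_eq_ite_of_sum_eq_one (hrow i)
  have hfix (i : Fin (2 * n)) : f i ≠ i := fun h => by simpa [hf, h] using hdiag i
  set A : Finset (Fin (2 * n)) := {x | (x : ℕ) < n}
  set B : Finset (Fin (2 * n)) := {x | n ≤ (x : ℕ)}
  have hA : #A = n := by simp only [A, Fin.card_filter_val_lt]; omega
  have hB : #B = n := by simp only [B, Fin.card_filter_le_val]; omega
  have hAB : Disjoint A B := disjoint_filter.mpr fun x _ h => not_le.mpr h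
  have hDcross (σ) : D σ = crossCount A B f σ := by
    simp only [hD, crossCount, hf, Nat.cast_ite, Nat.cast_one, Nat.cast_zero, ite_mul, one_mul,
      zero_mul, sum_ite_eq, mem_univ, if_true, ite_and, mem_filter, A, B, true_and]
  have hC1' : twoC1 = mutualCount f := by
    simp only [hC1, mutualCount, hf, Nat.cast_ite, Nat.cast_one, Nat.cast_zero,
      ite_zero_mul_ite_zero, one_mul]
  have hC2' : twoC2 = sharedCount f := by
    simp only [hC2, sharedCount, hf, Nat.cast_ite, Nat.cast_one, Nat.cast_zero,
      ite_zero_mul_ite_zero, one_mul]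
    refine sum_congr rfl fun i _ => sum_congr rfl fun k _ => ?_
    by_cases hik : i = k <;> simp [hik, ite_and, eq_comm]
  obtain ⟨h11, h21, h22⟩ := mapsToProb_of_two_mul_card_eq (A := A) (B := B)
    (by rw [hA, Fintype.card_fin]) (hB.trans hA.symm) (by rw [Fintype.card_fin]; omega)
  simp only [Fintype.card_fin] at h11 h21 h22
  rw [hN]
  simp only [hDcross, sum_perm_crossCount_sq hfix hAB, Fintype.card_perm, Fintype.card_fin,
    ← hC1', ← hC2', h11, h21, h22]
  rw [mul_div_cancel_left₀ _ (by positivity)]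
  ring

theorem stmt4 (n : ℕ) (hn : 2 ≤ n) (a : Fin (2 * n) → Fin (2 * n) → ℕ)
    (ha01 : ∀ i j, a i j ≤ 1) (hdiag : ∀ i, a i i = 0)
    (hrow : ∀ i, ∑ j, a i j = 1)
    (D : Equiv.Perm (Fin (2 * n)) → ℝ)
    (hD : ∀ σ, D σ = ∑ i, ∑ j, (a i j : ℝ) *
      (if (σ i : ℕ) < n then 1 else 0) * (if n ≤ (σ j : ℕ) then 1 else 0))
    (N twoC1 twoC2 : ℝ)
    (hN : N = (2 * n : ℕ))
    (hC1 : twoC1 = ∑ i, ∑ j, (a i j : ℝ) * (a j i : ℝ))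
    (hC2 : twoC2 = ∑ i, ∑ l, ∑ j, if i ≠ l then (a i j : ℝ) * (a l j : ℝ) else 0) :
    (∑ σ : Equiv.Perm (Fin (2 * n)), (D σ) ^ 2) /
      (Fintype.card (Equiv.Perm (Fin (2 * n))) : ℝ) =
    N ^ 2 / (4 * (N - 1)) + (N / (8 * (N - 1))) * twoC2 +
      (N * (N - 2) / (16 * (N - 1) * (N - 3))) * (N ^ 2 - 3 * N + twoC1 - twoC2) :=
  stmt4_general n hn a hdiag hrow D hD N twoC1 twoC2 hN hC1 hC2
end

section
/- With the setup of the nearest-neighbor indicator a on N = 2n points and a uniformly random permutation π, with D₁₂ as before and C₁, C₂ defined as the number of mutual nearest-neighbor pairs and the number of pairs sharing a nearest neighbor, Var(D₁₂) = (1/16)·( N²/(N−1) − N²/(N−1)² + 2C₁·N(N−2)/((N−1)(N−3)) + 2C₂·N(N−4)/((N−1)(N−3)) ). -/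
/-!
Write `X x = 1[π x ∈ s]` with `s` the first half of the points. Since every row of `a` sums to
one, `D₁₂ = n - Q` with `Q = ∑ a i j X i X j`, so `Var D₁₂ = Var Q`. The indicators are
idempotent, so a product of them depends only on the set `T` of its indices, and a uniform
permutation maps a fixed `T` into `s` with probability `μ #T`, where `μ k = (n)_k / (N)_k`.
Hence `E Q = N μ 2` and `E Q² = ∑ a i j a k l μ #{i, j, k, l}`. Given `i ≠ j` and `k ≠ l`,
`μ #{i, j, k, l}` is a combination of the coincidence indicators `[i = k]`, `[i = l]`, `[j = k]`,
`[j = l]`, `[i = k][j = l]` and `[i = l][j = k]`, whose sums against `a i j a k l` are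
`N`, `N`, `N`, `N + 2C₂`, `N` and `2C₁`; the rest is algebra in `n`.
-/

open Finset Equiv
open scoped BigOperators

theorem expect_sq_sub_sq_expect_const_sub {ι : Type*} [Fintype ι] [Nonempty ι] (c : ℝ)
    (f : ι → ℝ) :
    𝔼 i, (c - f i) ^ 2 - (𝔼 i, (c - f i)) ^ 2 = 𝔼 i, f i ^ 2 - (𝔼 i, f i) ^ 2 := by
  simp only [sub_sq, expect_add_distrib, expect_sub_distrib, Fintype.expect_const, ← mul_expect]
  ring

section

variable {α : Type*} [DecidableEq α]

theorem mul_prod_eq_prod_insert_of_idem {M : Type*} [CommMonoid M] {f : α → M}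
    (hf : ∀ x, f x * f x = f x) (a : α) (T : Finset α) :
    f a * ∏ x ∈ T, f x = ∏ x ∈ insert a T, f x := by
  by_cases ha : a ∈ T
  · rw [insert_eq_of_mem ha, ← mul_prod_erase T f ha, ← mul_assoc, hf]
  · rw [prod_insert ha]

/- `#{i, j, k, l}` is `4` minus the number of coincidences between `{i, j}` and `{k, l}`, and there
are two of them exactly when the pairs are equal. -/
theorem apply_card_quadruple {M : Type*} [CommRing M] (g : ℕ → M) {i j k l : α}
    (hij : i ≠ j) (hkl : k ≠ l) :
    g #{i, j, k, l} = g 4 +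
      (g 3 - g 4) * ((if i = k then 1 else 0) + (if i = l then 1 else 0) +
        (if j = k then 1 else 0) + (if j = l then 1 else 0)) +
      (g 2 - 2 * g 3 + g 4) * ((if i = k then 1 else 0) * (if j = l then 1 else 0) +
        (if i = l then 1 else 0) * (if j = k then 1 else 0)) := by
  by_cases hik : i = k <;> by_cases hil : i = l <;> by_cases hjk : j = k <;>
    by_cases hjl : j = l <;> subst_vars <;> simp_all [card_insert_of_notMem] <;> ring_nf

def permIndicator (s : Finset α) (σ : Perm α) (x : α) : ℝ := if σ x ∈ s then 1 else 0

theorem permIndicator_mul_self (s : Finset α) (σ : Perm α) (x : α) :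
    permIndicator s σ x * permIndicator s σ x = permIndicator s σ x := by
  unfold permIndicator; split_ifs <;> norm_num

end

noncomputable def mapsIntoProb {α : Type*} [Fintype α] (s : Finset α) (k : ℕ) : ℝ :=
  (#s).descFactorial k / (Fintype.card α).descFactorial k

section

variable {α : Type*} [Fintype α] [DecidableEq α]

/- Permutations act transitively on embeddings, so the left side does not depend on `e`: average
it over `e` as well and swap the two averages. -/
theorem expect_perm_prod_apply_embedding {ι M : Type*} [Fintype ι] [CommSemiring M]
    [Module ℚ≥0 M] (f : α → M) (e : ι ↪ α) :
    𝔼 σ : Perm α, ∏ m, f (σ (e m)) = 𝔼 w : ι ↪ α, ∏ m, f (w m) := by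
  have : Nonempty (ι ↪ α) := ⟨e⟩
  have indep (v : ι ↪ α) :
      𝔼 σ : Perm α, ∏ m, f (σ (v m)) = 𝔼 σ : Perm α, ∏ m, f (σ (e m)) := by
    obtain ⟨τ, hτ⟩ := Perm.exists_smul_eq_embedding e v
    refine Fintype.expect_equiv (Equiv.mulRight τ) _ _ fun σ => ?_
    simp [← hτ, Perm.mul_apply]
  calc 𝔼 σ : Perm α, ∏ m, f (σ (e m))
      = 𝔼 v : ι ↪ α, 𝔼 σ : Perm α, ∏ m, f (σ (v m)) := by
        simp only [indep, Fintype.expect_const]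
    _ = 𝔼 σ : Perm α, 𝔼 v : ι ↪ α, ∏ m, f (σ (v m)) := expect_comm ..
    _ = 𝔼 _σ : Perm α, 𝔼 w : ι ↪ α, ∏ m, f (w m) := by
      refine expect_congr rfl fun σ _ => ?_
      exact Fintype.expect_equiv (embeddingCongr (Equiv.refl ι) σ) _ _ fun v => by simp
    _ = 𝔼 w : ι ↪ α, ∏ m, f (w m) := Fintype.expect_const _

theorem expect_embedding_prod_indicator {ι : Type*} [Fintype ι] (s : Finset α) :
    𝔼 w : ι ↪ α, ∏ m, (if w m ∈ s then 1 else 0 : ℝ) =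
      (#s).descFactorial (Fintype.card ι) / (Fintype.card α).descFactorial (Fintype.card ι) := by
  classical
  have hcount : Fintype.card {w : ι ↪ α // ∀ m, w m ∈ s} = Fintype.card (ι ↪ s) :=
    Fintype.card_congr
      { toFun w := ⟨fun m => ⟨w.1 m, w.2 m⟩, fun x y h => w.1.injective (by simpa using h)⟩
        invFun u := ⟨u.trans (Function.Embedding.subtype _), fun m => (u m).2⟩
        left_inv _ := rfl
        right_inv _ := rfl }
  simp only [Fintype.expect_eq_sum_div_card, Fintype.prod_boole, sum_boole]
  rw [← Fintype.card_subtype, hcount, Fintype.card_embedding_eq, Fintype.card_embedding_eq]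
  simp

theorem sum_permIndicator (s : Finset α) (σ : Perm α) : ∑ x, permIndicator s σ x = #s := by
  simp only [permIndicator, Equiv.sum_comp σ (fun y => if y ∈ s then (1 : ℝ) else 0),
    sum_boole, filter_mem_eq_inter, univ_inter]

theorem expect_prod_permIndicator (s T : Finset α) :
    𝔼 σ : Perm α, ∏ x ∈ T, permIndicator s σ x = mapsIntoProb s #T := by
  have h := expect_perm_prod_apply_embedding (fun y => if y ∈ s then (1 : ℝ) else 0)
    (Function.Embedding.subtype (· ∈ T))
  beta_reduce at h
  rw [expect_embedding_prod_indicator, Fintype.card_coe] at h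
  simp only [permIndicator, mapsIntoProb, ← prod_coe_sort T]
  exact h

def arcsInside (a : α → α → ℝ) (s : Finset α) (σ : Perm α) : ℝ :=
  ∑ i, ∑ j, a i j * (permIndicator s σ i * permIndicator s σ j)

theorem expect_arcsInside {a : α → α → ℝ} (hrow : ∀ i, ∑ j, a i j = 1)
    (hdiag : ∀ i, a i i = 0) (s : Finset α) :
    𝔼 σ : Perm α, arcsInside a s σ = Fintype.card α * mapsIntoProb s 2 := by
  have hterm (i j : α) : a i j * mapsIntoProb s #{i, j} = a i j * mapsIntoProb s 2 := by
    rcases eq_or_ne i j with rfl | hij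
    · simp [hdiag]
    · rw [card_pair hij]
  have hprod (σ : Perm α) (i j : α) :
      permIndicator s σ i * permIndicator s σ j = ∏ x ∈ {i, j}, permIndicator s σ x := by
    rw [← mul_prod_eq_prod_insert_of_idem (permIndicator_mul_self s σ), prod_singleton]
  simp only [arcsInside, expect_sum_comm, ← mul_expect, hprod, expect_prod_permIndicator, hterm,
    ← sum_mul, hrow, sum_const, card_univ, nsmul_one]

theorem expect_arcsInside_sq (a : α → α → ℝ) (s : Finset α) :
    𝔼 σ : Perm α, arcsInside a s σ ^ 2 =
      ∑ i, ∑ j, ∑ k, ∑ l, a i j * a k l * mapsIntoProb s #{i, j, k, l} := by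
  have hprod (σ : Perm α) (i j k l : α) :
      a i j * (permIndicator s σ i * permIndicator s σ j) *
        (a k l * (permIndicator s σ k * permIndicator s σ l)) =
      a i j * a k l * ∏ x ∈ {i, j, k, l}, permIndicator s σ x := by
    simp only [← mul_prod_eq_prod_insert_of_idem (permIndicator_mul_self s σ), prod_singleton]
    ring
  simp_rw [arcsInside, sq, sum_mul]
  simp only [mul_sum, hprod, expect_sum_comm, ← mul_expect, expect_prod_permIndicator]

theorem sum_mul_apply_card_quadruple {a : α → α → ℝ} (hrow : ∀ i, ∑ j, a i j = 1)
    (hdiag : ∀ i, a i i = 0) (g : ℕ → ℝ) :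
    ∑ i, ∑ j, ∑ k, ∑ l, a i j * a k l * g #{i, j, k, l} =
      g 4 * Fintype.card α ^ 2 +
      (g 3 - g 4) * (3 * Fintype.card α + ∑ i, ∑ k, ∑ j, a i j * a k j) +
      (g 2 - 2 * g 3 + g 4) * (∑ i, ∑ j, a i j * a i j + ∑ i, ∑ j, a i j * a j i) := by
  set δ : α → α → ℝ := fun x y => if x = y then 1 else 0 with hδ
  have h0 : ∑ i, ∑ j, ∑ k, ∑ l, a i j * a k l = Fintype.card α ^ 2 := by
    simp [← mul_sum, hrow, sq]
  have hik : ∑ i, ∑ j, ∑ k, ∑ l, a i j * a k l * δ i k = Fintype.card α := by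
    simp [hδ, mul_ite, ← mul_sum, hrow]
  have hil : ∑ i, ∑ j, ∑ k, ∑ l, a i j * a k l * δ i l = Fintype.card α := by
    simp only [hδ, mul_ite, mul_one, mul_zero, sum_ite_eq, mem_univ, if_true]
    simp_rw [← mul_sum, ← sum_mul, hrow, one_mul]
    rw [sum_comm]
    simp [hrow]
  have hjk : ∑ i, ∑ j, ∑ k, ∑ l, a i j * a k l * δ j k = Fintype.card α := by
    simp [hδ, mul_ite, ← mul_sum, hrow]
  have hjl :
      ∑ i, ∑ j, ∑ k, ∑ l, a i j * a k l * δ j l = ∑ i, ∑ k, ∑ j, a i j * a k j := by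
    simp only [hδ, mul_ite, mul_one, mul_zero, sum_ite_eq, mem_univ, if_true]
    exact sum_congr rfl fun i _ => sum_comm
  have hikjl :
      ∑ i, ∑ j, ∑ k, ∑ l, a i j * a k l * (δ i k * δ j l) = ∑ i, ∑ j, a i j * a i j := by
    simp [hδ, mul_ite]
  have hiljk :
      ∑ i, ∑ j, ∑ k, ∑ l, a i j * a k l * (δ i l * δ j k) = ∑ i, ∑ j, a i j * a j i := by
    simp [hδ, mul_ite]
  have hpt (i j k l : α) : a i j * a k l * g #{i, j, k, l} =
      g 4 * (a i j * a k l) +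
      (g 3 - g 4) * (a i j * a k l * δ i k + a i j * a k l * δ i l + a i j * a k l * δ j k +
        a i j * a k l * δ j l) +
      (g 2 - 2 * g 3 + g 4) *
        (a i j * a k l * (δ i k * δ j l) + a i j * a k l * (δ i l * δ j k)) := by
    rcases eq_or_ne i j with rfl | hij
    · simp [hdiag]
    rcases eq_or_ne k l with rfl | hkl
    · simp [hdiag]
    rw [apply_card_quadruple g hij hkl]
    ring
  simp only [hpt, sum_add_distrib, ← mul_sum _ _ (g 4), ← mul_sum _ _ (g 3 - g 4),
    ← mul_sum _ _ (g 2 - 2 * g 3 + g 4), h0, hik, hil, hjk, hjl, hikjl, hiljk]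
  ring

theorem sum_sum_mul_eq_sum_sum_ite_ne_add {a : α → α → ℝ} (hrow : ∀ i, ∑ j, a i j = 1)
    (hsq : ∀ i j, a i j * a i j = a i j) :
    ∑ i, ∑ k, ∑ j, a i j * a k j =
      (∑ i, ∑ k, ∑ j, if i ≠ k then a i j * a k j else 0) + Fintype.card α := by
  have hsplit (i k : α) : ∑ j, a i j * a k j =
      (∑ j, if i ≠ k then a i j * a k j else 0) + if i = k then 1 else 0 := by
    by_cases h : i = k <;> simp [h, hsq, hrow]
  simp only [hsplit, sum_add_distrib, sum_ite_eq, mem_univ, if_true, sum_const, card_univ,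
    nsmul_one]

def crossArcs (a : α → α → ℝ) (s : Finset α) (σ : Perm α) : ℝ :=
  ∑ i, ∑ j, a i j * permIndicator s σ i * (1 - permIndicator s σ j)

theorem crossArcs_eq_card_sub_arcsInside {a : α → α → ℝ} (hrow : ∀ i, ∑ j, a i j = 1)
    (s : Finset α) (σ : Perm α) :
    crossArcs a s σ = #s - arcsInside a s σ := by
  have hsplit (i j : α) : a i j * permIndicator s σ i * (1 - permIndicator s σ j) =
      permIndicator s σ i * a i j - a i j * (permIndicator s σ i * permIndicator s σ j) := by
    ring
  simp only [crossArcs, hsplit, sum_sub_distrib, ← mul_sum, hrow, mul_one, sum_permIndicator,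
    arcsInside]

theorem variance_crossArcs {a : α → α → ℝ} (hrow : ∀ i, ∑ j, a i j = 1)
    (hdiag : ∀ i, a i i = 0) (hsq : ∀ i j, a i j * a i j = a i j) (s : Finset α) :
    𝔼 σ : Perm α, crossArcs a s σ ^ 2 - (𝔼 σ : Perm α, crossArcs a s σ) ^ 2 =
      mapsIntoProb s 4 * Fintype.card α ^ 2 +
      (mapsIntoProb s 3 - mapsIntoProb s 4) *
        (4 * Fintype.card α + ∑ i, ∑ k, ∑ j, if i ≠ k then a i j * a k j else 0) +
      (mapsIntoProb s 2 - 2 * mapsIntoProb s 3 + mapsIntoProb s 4) *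
        (Fintype.card α + ∑ i, ∑ j, a i j * a j i) -
      (Fintype.card α * mapsIntoProb s 2) ^ 2 := by
  simp only [crossArcs_eq_card_sub_arcsInside hrow, expect_sq_sub_sq_expect_const_sub,
    expect_arcsInside_sq, expect_arcsInside hrow hdiag, sum_mul_apply_card_quadruple hrow hdiag,
    sum_sum_mul_eq_sum_sum_ite_ne_add hrow hsq, hsq, hrow, sum_const, card_univ, nsmul_one]
  ring

end

theorem mapsIntoProb_combination_of_card_eq_two_mul {α : Type*} [Fintype α] {s : Finset α}
    (hs : 2 ≤ #s) (hα : Fintype.card α = 2 * #s) {N : ℝ} (hN : N = Fintype.card α) (c₁ c₂ : ℝ) :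
    mapsIntoProb s 4 * N ^ 2 + (mapsIntoProb s 3 - mapsIntoProb s 4) * (4 * N + c₂) +
      (mapsIntoProb s 2 - 2 * mapsIntoProb s 3 + mapsIntoProb s 4) * (N + c₁) -
      (N * mapsIntoProb s 2) ^ 2 =
    1 / 16 * (N ^ 2 / (N - 1) - N ^ 2 / (N - 1) ^ 2 + c₁ * (N * (N - 2) / ((N - 1) * (N - 3))) +
      c₂ * (N * (N - 4) / ((N - 1) * (N - 3)))) := by
  have hm : (2 : ℝ) ≤ #s := by exact_mod_cast hs
  simp only [mapsIntoProb, hα, ← descPochhammer_eval_eq_descFactorial ℝ,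
    descPochhammer_eval_eq_prod_range, prod_range_succ, prod_range_zero, one_mul]
  rw [hN, hα]
  push_cast
  simp only [sub_zero]
  have h0 : (#s : ℝ) ≠ 0 := by linarith
  have h1 : (#s - 1 : ℝ) ≠ 0 := by linarith
  have h3 : (#s * 2 - 3 : ℝ) ≠ 0 := by linarith
  field_simp
  ring

theorem stmt5 (n : ℕ) (hn : 2 ≤ n) (a : Fin (2 * n) → Fin (2 * n) → ℕ)
    (ha01 : ∀ i j, a i j ≤ 1) (hdiag : ∀ i, a i i = 0)
    (hrow : ∀ i, ∑ j, a i j = 1)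
    (D : Equiv.Perm (Fin (2 * n)) → ℝ)
    (hD : ∀ σ, D σ = ∑ i, ∑ j, (a i j : ℝ) *
      (if (σ i : ℕ) < n then 1 else 0) * (if n ≤ (σ j : ℕ) then 1 else 0))
    (N twoC1 twoC2 : ℝ)
    (hN : N = (2 * n : ℕ))
    (hC1 : twoC1 = ∑ i, ∑ j, (a i j : ℝ) * (a j i : ℝ))
    (hC2 : twoC2 = ∑ i, ∑ l, ∑ j, if i ≠ l then (a i j : ℝ) * (a l j : ℝ) else 0) :
    (∑ σ : Equiv.Perm (Fin (2 * n)), (D σ) ^ 2) /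
        (Fintype.card (Equiv.Perm (Fin (2 * n))) : ℝ) -
      ((∑ σ : Equiv.Perm (Fin (2 * n)), D σ) /
        (Fintype.card (Equiv.Perm (Fin (2 * n))) : ℝ)) ^ 2 =
    (1 / 16) * (N ^ 2 / (N - 1) - N ^ 2 / (N - 1) ^ 2 +
      twoC1 * (N * (N - 2) / ((N - 1) * (N - 3))) +
      twoC2 * (N * (N - 4) / ((N - 1) * (N - 3)))) := by
  set A : Fin (2 * n) → Fin (2 * n) → ℝ := fun i j => a i j
  set s : Finset (Fin (2 * n)) := {x | (x : ℕ) < n}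
  have hrowA (i) : ∑ j, A i j = 1 := by simp only [A]; exact_mod_cast hrow i
  have hdiagA (i) : A i i = 0 := by simp [A, hdiag]
  have hsqA (i j) : A i j * A i j = A i j := by
    rcases Nat.le_one_iff_eq_zero_or_eq_one.mp (ha01 i j) with h | h <;> simp [A, h]
  have hs : #s = n := by simp [s, Fin.card_filter_val_lt]; omega
  have hDA : D = crossArcs A s := by
    ext σ
    refine (hD σ).trans (sum_congr rfl fun i _ => sum_congr rfl fun j _ => ?_)
    simp only [permIndicator, s, mem_filter, mem_univ, true_and, A]
    split_ifs <;> first | omega | ring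
  have hNα : N = Fintype.card (Fin (2 * n)) := by rw [hN, Fintype.card_fin]
  rw [← Fintype.expect_eq_sum_div_card, ← Fintype.expect_eq_sum_div_card, hDA,
    variance_crossArcs hrowA hdiagA hsqA, ← hNα, hC1, hC2]
  exact mapsIntoProb_combination_of_card_eq_two_mul (hs.symm ▸ hn) (by simp [hs]) hNα _ _
end

section
/- With the nearest-neighbor setup on N = 2n points, the covariance of D₁₂ and D₂₁ under the uniform random permutation satisfies Cov(D₁₂, D₂₁) = (1/16)·( N²/(N−1) − N²/(N−1)² + (2C₁ − 2C₂)·N(N−2)/((N−1)(N−3)) ). -/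
/-!
Write `a` as the graph of the nearest-neighbour map `ν` (`a i j = 1 ↔ j = ν i`, `ν i ≠ i`). Then
`D₁₂ σ` counts the `i` with `σ i` in the lower half `L` and `σ (ν i)` in the upper half `R`, and
`D₂₁ σ` the same with `L` and `R` exchanged.

The number of permutations sending a set `I` into `L` and a disjoint set `J` into `R` is
`n^(|I|) n^(|J|) (N - |I| - |J|)!` (falling factorials), since restricting `σ` to `I ∪ J` is
`(N - |I| - |J|)!`-to-one onto the injections of `I ∪ J`. The term of `D₁₂ D₂₁` indexed by `(i, k)`
asks `σ` to send `{i, ν k}` into `L` and `{ν i, k}` into `R`: it vanishes when these sets meet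
(`i = k` or `ν i = ν k`), and otherwise the sets have one or two elements according as `ν k = i`,
`ν i = k`. Counting the pairs of each kind by `2C₁ = #{i | ν (ν i) = i}` and
`2C₂ = #{(i, k) | i ≠ k, ν i = ν k}` gives the second moment.
-/

open Finset Nat Equiv

namespace Function.Embedding

variable {α : Type*} [Fintype α] [DecidableEq α]

theorem card_filter_inl_mem_inr_mem {ι₁ ι₂ : Type*} [Fintype ι₁] [Fintype ι₂]
    {A B : Finset α} (hAB : Disjoint A B) :
    #{q : ι₁ ⊕ ι₂ ↪ α | (∀ t, q (.inl t) ∈ A) ∧ ∀ t, q (.inr t) ∈ B} =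
      (#A).descFactorial (Fintype.card ι₁) * (#B).descFactorial (Fintype.card ι₂) := by
  let e : {q : ι₁ ⊕ ι₂ ↪ α // (∀ t, q (.inl t) ∈ A) ∧ ∀ t, q (.inr t) ∈ B} ≃
      (ι₁ ↪ A) × (ι₂ ↪ B) :=
    { toFun q := (⟨fun t => ⟨q.1 (.inl t), q.2.1 t⟩, fun _ _ h => Sum.inl_injective
          (q.1.injective (congrArg Subtype.val h))⟩,
        ⟨fun t => ⟨q.1 (.inr t), q.2.2 t⟩, fun _ _ h => Sum.inr_injective
          (q.1.injective (congrArg Subtype.val h))⟩)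
      invFun f := ⟨⟨Sum.elim (fun t => (f.1 t : α)) (fun t => (f.2 t : α)),
          (Subtype.val_injective.comp f.1.injective).sumElim
            (Subtype.val_injective.comp f.2.injective) fun s t h =>
              disjoint_left.1 hAB (f.1 s).2 ((show (f.1 s : α) = f.2 t from h) ▸ (f.2 t).2)⟩,
        fun t => (f.1 t).2, fun t => (f.2 t).2⟩
      left_inv q := by ext (t | t) <;> rfl
      right_inv f := rfl }
  rw [← Fintype.card_subtype, Fintype.card_congr e, Fintype.card_prod,
    Fintype.card_embedding_eq, Fintype.card_embedding_eq, Fintype.card_coe, Fintype.card_coe]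

end Function.Embedding

namespace Equiv.Perm

variable {α ι : Type*} [Fintype α] [DecidableEq α] [Fintype ι]

theorem card_filter_forall_apply_eq (p q : ι ↪ α) :
    #{σ : Perm α | ∀ t, σ (p t) = q t} = (Fintype.card α - Fintype.card ι)! := by
  let e₀ : Set.range p ≃ Set.range q :=
    (Equiv.ofInjective p p.injective).symm.trans (Equiv.ofInjective q q.injective)
  have he₀ (t : ι) : (e₀ ⟨p t, t, rfl⟩ : α) = q t := by
    have : (Equiv.ofInjective p p.injective).symm ⟨p t, t, rfl⟩ = t :=
      (Equiv.symm_apply_eq _).2 rfl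
    simp only [e₀, Equiv.trans_apply, this, Equiv.ofInjective_apply]
  have hcompl (r : ι ↪ α) :
      Fintype.card ↥(Set.range r)ᶜ = Fintype.card α - Fintype.card ι := by
    rw [Fintype.card_compl_set, Set.card_range_of_injective r.injective]
  calc #{σ : Perm α | ∀ t, σ (p t) = q t}
      = Fintype.card {σ : Perm α // ∀ x : Set.range p, σ x = e₀ x} := by
        rw [Fintype.card_subtype]
        congr 1
        ext σ
        simp only [mem_filter, mem_univ, true_and, Subtype.forall]
        constructor
        · rintro h _ ⟨t, rfl⟩
          exact (h t).trans (he₀ t).symm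
        · exact fun h t => (h _ ⟨t, rfl⟩).trans (he₀ t)
    _ = Fintype.card (↥(Set.range p)ᶜ ≃ ↥(Set.range q)ᶜ) :=
      Fintype.card_congr (Equiv.Set.compl e₀)
    _ = (Fintype.card α - Fintype.card ι)! := by
      rw [Fintype.card_equiv (Fintype.equivOfCardEq ((hcompl p).trans (hcompl q).symm)), hcompl]

theorem card_filter_embedding_trans_mem (p : ι ↪ α) (s : Finset (ι ↪ α)) :
    #{σ : Perm α | p.trans σ.toEmbedding ∈ s} = #s * (Fintype.card α - Fintype.card ι)! := by
  rw [card_eq_sum_card_fiberwise (s := {σ : Perm α | p.trans σ.toEmbedding ∈ s})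
    (f := fun σ : Perm α => p.trans σ.toEmbedding) (t := s)
    (fun σ hσ => (mem_filter.1 hσ).2), ← smul_eq_mul, ← sum_const]
  refine sum_congr rfl fun q hq => ?_
  rw [← card_filter_forall_apply_eq p q, filter_filter]
  congr 1
  refine filter_congr fun σ _ => ?_
  constructor
  · rintro ⟨-, rfl⟩ t
    rfl
  · intro h
    have hq' : p.trans σ.toEmbedding = q := Function.Embedding.ext h
    exact ⟨hq' ▸ hq, hq'⟩

theorem card_filter_mapsTo {I J A B : Finset α} (hIJ : _root_.Disjoint I J)
    (hAB : _root_.Disjoint A B) :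
    #{σ : Perm α | (∀ x ∈ I, σ x ∈ A) ∧ ∀ x ∈ J, σ x ∈ B} =
      (#A).descFactorial #I * (#B).descFactorial #J * (Fintype.card α - #I - #J)! := by
  let p : I ⊕ J ↪ α := ⟨Sum.elim Subtype.val Subtype.val,
    Subtype.val_injective.sumElim Subtype.val_injective
      fun s t h => disjoint_left.1 hIJ s.2 (h ▸ t.2)⟩
  have := card_filter_embedding_trans_mem p {q | (∀ t, q (.inl t) ∈ A) ∧ ∀ t, q (.inr t) ∈ B}
  rw [Function.Embedding.card_filter_inl_mem_inr_mem hAB, Fintype.card_sum, Fintype.card_coe,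
    Fintype.card_coe, Nat.sub_add_eq] at this
  rw [← this]
  simp [p]

end Equiv.Perm

section

variable {α : Type*} [Fintype α]

def mapsToCount (A B : Finset α) (j l : ℕ) : ℕ :=
  (#A).descFactorial j * (#B).descFactorial l * (Fintype.card α - j - l)!

theorem cast_mapsToCount (A B : Finset α) {j l : ℕ} (h : j + l ≤ Fintype.card α) :
    (mapsToCount A B j l : ℝ) = (Fintype.card α)! * (#A).descFactorial j *
      (#B).descFactorial l / (Fintype.card α).descFactorial (j + l) := by
  have hpos : ((Fintype.card α).descFactorial (j + l) : ℝ) ≠ 0 := by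
    exact_mod_cast (Nat.descFactorial_pos.2 h).ne'
  rw [eq_div_iff hpos, mapsToCount, ← Nat.factorial_mul_descFactorial h, Nat.sub_sub]
  push_cast
  ring

variable [DecidableEq α]

section Crossings

variable (ν : α → α) (A B : Finset α)

def crossingCount (σ : Perm α) : ℕ := #{i | σ i ∈ A ∧ σ (ν i) ∈ B}

theorem crossingCount_eq_sum (σ : Perm α) :
    (crossingCount ν A B σ : ℝ) = ∑ i, ∑ j, (if j = ν i then 1 else 0) *
      (if σ i ∈ A then 1 else 0) * (if σ j ∈ B then 1 else 0) := by
  simp only [crossingCount, card_filter, Nat.cast_sum, ite_mul, one_mul, zero_mul, sum_ite_eq',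
    mem_univ, if_true]
  exact sum_congr rfl fun i _ => by split_ifs <;> simp_all

theorem crossingCount_eq_sum_transpose (σ : Perm α) :
    (crossingCount ν B A σ : ℝ) = ∑ i, ∑ j, (if i = ν j then 1 else 0) *
      (if σ i ∈ A then 1 else 0) * (if σ j ∈ B then 1 else 0) := by
  rw [crossingCount_eq_sum, sum_comm]
  exact sum_congr rfl fun i _ => sum_congr rfl fun j _ => by ring

theorem card_filter_comp_self_eq_sum :
    (#{i | ν (ν i) = i} : ℝ) =
      ∑ i, ∑ j, (if j = ν i then 1 else 0) * (if i = ν j then 1 else 0) := by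
  simp only [card_filter, Nat.cast_sum, ite_mul, one_mul, zero_mul, sum_ite_eq', mem_univ,
    if_true]
  exact sum_congr rfl fun i _ => by simp [eq_comm]

theorem card_filter_ne_and_apply_eq_sum :
    (#{p : α × α | p.1 ≠ p.2 ∧ ν p.1 = ν p.2} : ℝ) =
      ∑ i, ∑ l, ∑ j, if i ≠ l then (if j = ν i then 1 else 0) * (if j = ν l then 1 else 0)
        else 0 := by
  simp only [card_filter, Nat.cast_sum, Fintype.sum_prod_type, ite_mul, one_mul, zero_mul]
  exact sum_congr rfl fun i _ => sum_congr rfl fun l _ => by split_ifs <;> simp_all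

theorem sum_crossingCount (hν : ∀ i, ν i ≠ i) (hAB : Disjoint A B) :
    ∑ σ : Perm α, crossingCount ν A B σ = Fintype.card α * mapsToCount A B 1 1 := by
  have hpair (i : α) : #{σ : Perm α | σ i ∈ A ∧ σ (ν i) ∈ B} = mapsToCount A B 1 1 := by
    simpa [mapsToCount] using Perm.card_filter_mapsTo (disjoint_singleton.2 (hν i).symm) hAB
  simp only [crossingCount, card_filter]
  rw [sum_comm]
  simp only [← card_filter, hpair, sum_const, Finset.card_univ, smul_eq_mul]

theorem sum_crossingCount_mul_crossingCount_eq_sum_card :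
    ∑ σ : Perm α, crossingCount ν A B σ * crossingCount ν B A σ =
      ∑ i, ∑ k, #{σ : Perm α | (∀ x ∈ ({i, ν k} : Finset α), σ x ∈ A) ∧
        ∀ x ∈ ({ν i, k} : Finset α), σ x ∈ B} := by
  simp only [crossingCount, card_filter, sum_mul_sum]
  rw [sum_comm]
  refine sum_congr rfl fun i _ => ?_
  rw [sum_comm]
  refine sum_congr rfl fun k _ => sum_congr rfl fun σ _ => ?_
  simp only [mem_insert, mem_singleton, forall_eq_or_imp, forall_eq, ite_zero_mul_ite_zero,
    mul_one]
  exact if_congr (by tauto) rfl rfl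

theorem card_filter_mapsTo_pair (hν : ∀ i, ν i ≠ i) (hAB : Disjoint A B) (i k : α) :
    #{σ : Perm α | (∀ x ∈ ({i, ν k} : Finset α), σ x ∈ A) ∧
        ∀ x ∈ ({ν i, k} : Finset α), σ x ∈ B} =
      if i = k ∨ ν i = ν k then 0
      else mapsToCount A B (if ν k = i then 1 else 2) (if ν i = k then 1 else 2) := by
  by_cases h : i = k ∨ ν i = ν k
  · rw [if_pos h, Finset.card_eq_zero, filter_eq_empty_iff]
    rintro σ - ⟨hA, hB⟩
    obtain ⟨x, hxI, hxJ⟩ : ∃ x, x ∈ ({i, ν k} : Finset α) ∧ x ∈ ({ν i, k} : Finset α) := by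
      rcases h with rfl | h
      · exact ⟨i, by simp, by simp⟩
      · exact ⟨ν k, by simp, by simp [h]⟩
    exact disjoint_left.1 hAB (hA x hxI) (hB x hxJ)
  · rw [not_or] at h
    have hIJ : Disjoint ({i, ν k} : Finset α) {ν i, k} := by
      simp only [disjoint_insert_left, disjoint_insert_right, disjoint_singleton, mem_insert,
        mem_singleton]
      exact ⟨not_or.2 ⟨hν i, h.2⟩, h.1, hν k⟩
    rw [if_neg (not_or.2 h), Perm.card_filter_mapsTo hIJ hAB, mapsToCount, card_insert_eq_ite,
      card_insert_eq_ite]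
    simp only [mem_singleton, card_singleton, @eq_comm _ i (ν k)]

theorem sum_crossingCount_mul_crossingCount (hν : ∀ i, ν i ≠ i) (hAB : Disjoint A B) :
    ∑ σ : Perm α, (crossingCount ν A B σ : ℝ) * crossingCount ν B A σ =
      #{i | ν (ν i) = i} * ((mapsToCount A B 1 1 : ℝ) - mapsToCount A B 1 2 -
          mapsToCount A B 2 1 + mapsToCount A B 2 2) +
        Fintype.card α * ((mapsToCount A B 1 2 : ℝ) + mapsToCount A B 2 1 -
          2 * mapsToCount A B 2 2) +
        ((Fintype.card α : ℝ) ^ 2 - Fintype.card α -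
          #{p : α × α | p.1 ≠ p.2 ∧ ν p.1 = ν p.2}) * mapsToCount A B 2 2 := by
  set M : ℕ → ℕ → ℝ := fun j l => mapsToCount A B j l
  -- inclusion–exclusion over the coincidences `ν k = i` and `ν i = k`
  have hsplit (i k : α) : ((if i = k ∨ ν i = ν k then 0
      else mapsToCount A B (if ν k = i then 1 else 2) (if ν i = k then 1 else 2) : ℕ) : ℝ) =
        (if ν k = i ∧ ν i = k then M 1 1 - M 1 2 - M 2 1 + M 2 2 else 0) +
        (if ν k = i then M 1 2 - M 2 2 else 0) + (if ν i = k then M 2 1 - M 2 2 else 0) +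
        M 2 2 - (if i = k then M 2 2 else 0) - (if i ≠ k ∧ ν i = ν k then M 2 2 else 0) := by
    have := hν i
    have := hν k
    by_cases hik : i = k
    · subst hik
      simp_all
    by_cases hνik : ν i = ν k
    · simp_all
    split_ifs <;> simp_all <;> ring
  have hsum : ∑ σ : Perm α, (crossingCount ν A B σ : ℝ) * crossingCount ν B A σ =
      ∑ i, ∑ k, ((if i = k ∨ ν i = ν k then 0
        else mapsToCount A B (if ν k = i then 1 else 2) (if ν i = k then 1 else 2) : ℕ) : ℝ) := by
    simp only [← card_filter_mapsTo_pair ν A B hν hAB]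
    exact_mod_cast sum_crossingCount_mul_crossingCount_eq_sum_card ν A B
  have h1 (c : ℝ) : ∑ i : α, ∑ k : α, (if ν k = i ∧ ν i = k then c else 0) =
      #{i | ν (ν i) = i} * c := by
    simp only [and_comm, ite_and, sum_ite_eq, mem_univ, if_true, ← sum_filter, sum_const,
      nsmul_eq_mul]
  have h2 (c : ℝ) : ∑ i : α, ∑ k : α, (if ν k = i then c else 0) = Fintype.card α * c := by
    rw [sum_comm]
    simp
  have h3 (c : ℝ) : ∑ i : α, ∑ k : α, (if ν i = k then c else 0) = Fintype.card α * c := by simp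
  have h4 (c : ℝ) : ∑ i : α, ∑ k : α, (if i = k then c else 0) = Fintype.card α * c := by simp
  have h5 (c : ℝ) : ∑ i : α, ∑ k : α, (if i ≠ k ∧ ν i = ν k then c else 0) =
      #{p : α × α | p.1 ≠ p.2 ∧ ν p.1 = ν p.2} * c := by
    rw [← Fintype.sum_prod_type' (f := fun i k : α => if i ≠ k ∧ ν i = ν k then c else 0),
      ← sum_filter, sum_const, nsmul_eq_mul]
  simp only [hsum, hsplit, sum_add_distrib, sum_sub_distrib, h1, h2, h3, h4, h5, sum_const,
    Finset.card_univ, nsmul_eq_mul, M]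
  ring

theorem covariance_crossingCount {n : ℕ} (hn : 2 ≤ n) (hα : Fintype.card α = 2 * n)
    (hA : #A = n) (hB : #B = n) (hν : ∀ i, ν i ≠ i) (hAB : Disjoint A B) :
    (∑ σ : Perm α, (crossingCount ν A B σ : ℝ) * crossingCount ν B A σ) / (Fintype.card α)! -
        (∑ σ : Perm α, (crossingCount ν A B σ : ℝ)) / (Fintype.card α)! *
          ((∑ σ : Perm α, (crossingCount ν B A σ : ℝ)) / (Fintype.card α)!) =
      1 / 16 * ((Fintype.card α : ℝ) ^ 2 / (Fintype.card α - 1) -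
        (Fintype.card α : ℝ) ^ 2 / (Fintype.card α - 1) ^ 2 +
        ((#{i | ν (ν i) = i} : ℝ) - #{p : α × α | p.1 ≠ p.2 ∧ ν p.1 = ν p.2}) *
          (Fintype.card α * (Fintype.card α - 2) /
            ((Fintype.card α - 1) * (Fintype.card α - 3)))) := by
  have hM (X Y : Finset α) (hX : #X = n) (hY : #Y = n) (j l : ℕ) (h : j + l ≤ 4) :
      (mapsToCount X Y j l : ℝ) =
        (2 * n)! * n.descFactorial j * n.descFactorial l / (2 * n).descFactorial (j + l) := by
    rw [cast_mapsToCount X Y (by omega), hX, hY, hα]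
  rw [sum_crossingCount_mul_crossingCount ν A B hν hAB, ← Nat.cast_sum, ← Nat.cast_sum,
    sum_crossingCount ν A B hν hAB, sum_crossingCount ν B A hν hAB.symm, hα]
  push_cast
  rw [hM A B hA hB 1 1 (by norm_num), hM A B hA hB 1 2 (by norm_num),
    hM A B hA hB 2 1 (by norm_num), hM A B hA hB 2 2 (by norm_num),
    hM B A hB hA 1 1 (by norm_num)]
  obtain ⟨m, rfl⟩ := Nat.exists_eq_add_of_le' hn
  simp only [Nat.descFactorial, Nat.sub_zero]
  push_cast [Nat.cast_sub (show 1 ≤ 2 * (m + 2) by omega),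
    Nat.cast_sub (show 2 ≤ 2 * (m + 2) by omega), Nat.cast_sub (show 3 ≤ 2 * (m + 2) by omega),
    Nat.cast_sub (show 1 ≤ m + 2 by omega)]
  have : ((2 * (m + 2))! : ℝ) ≠ 0 := by positivity
  ring_nf
  field_simp
  ring

end Crossings

end

theorem exists_eq_pi_single_of_sum_eq_one {ι : Type*} [Fintype ι] [DecidableEq ι] {b : ι → ℕ}
    (h : ∑ j, b j = 1) : ∃ j, b = Pi.single j 1 := by
  obtain ⟨j, hj⟩ := (Finsupp.sum_eq_one_iff (Finsupp.equivFunOnFinite.symm b)).1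
    (by rwa [Finsupp.sum_fintype _ _ fun _ => rfl])
  exact ⟨j, by simpa [Finsupp.single_eq_pi_single] using congrArg (⇑) hj⟩

theorem stmt7_general (n : ℕ) (hn : 2 ≤ n) (a : Fin (2 * n) → Fin (2 * n) → ℕ)
    (hdiag : ∀ i, a i i = 0)
    (hrow : ∀ i, ∑ j, a i j = 1)
    (D12 D21 : Equiv.Perm (Fin (2 * n)) → ℝ)
    (hD12 : ∀ σ, D12 σ = ∑ i, ∑ j, (a i j : ℝ) *
      (if (σ i : ℕ) < n then 1 else 0) * (if n ≤ (σ j : ℕ) then 1 else 0))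
    (hD21 : ∀ σ, D21 σ = ∑ i, ∑ j, (a j i : ℝ) *
      (if (σ i : ℕ) < n then 1 else 0) * (if n ≤ (σ j : ℕ) then 1 else 0))
    (N twoC1 twoC2 : ℝ)
    (hN : N = (2 * n : ℕ))
    (hC1 : twoC1 = ∑ i, ∑ j, (a i j : ℝ) * (a j i : ℝ))
    (hC2 : twoC2 = ∑ i, ∑ l, ∑ j, if i ≠ l then (a i j : ℝ) * (a l j : ℝ) else 0) :
    (∑ σ : Equiv.Perm (Fin (2 * n)), D12 σ * D21 σ) /
        (Fintype.card (Equiv.Perm (Fin (2 * n))) : ℝ) -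
      ((∑ σ : Equiv.Perm (Fin (2 * n)), D12 σ) /
          (Fintype.card (Equiv.Perm (Fin (2 * n))) : ℝ)) *
        ((∑ σ : Equiv.Perm (Fin (2 * n)), D21 σ) /
          (Fintype.card (Equiv.Perm (Fin (2 * n))) : ℝ)) =
    (1 / 16) * (N ^ 2 / (N - 1) - N ^ 2 / (N - 1) ^ 2 +
      (twoC1 - twoC2) * (N * (N - 2) / ((N - 1) * (N - 3)))) := by
  choose ν hν using fun i => exists_eq_pi_single_of_sum_eq_one (hrow i)
  have ha (i j) : (a i j : ℝ) = if j = ν i then 1 else 0 := by simp [hν, Pi.single_apply]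
  have hνne (i) : ν i ≠ i := fun h => by simpa [hν, h] using hdiag i
  set L : Finset (Fin (2 * n)) := {x | (x : ℕ) < n}
  set R : Finset (Fin (2 * n)) := {x | n ≤ (x : ℕ)}
  have hL : #L = n := by simp [L, Fin.card_filter_val_lt]; omega
  have hR : #R = n := by
    rw [show R = Lᶜ by ext; simp [L, R], card_compl, Fintype.card_fin, hL]; omega
  have h12 (σ) : D12 σ = crossingCount ν L R σ := by
    rw [hD12, crossingCount_eq_sum]; simp [ha, L, R]
  have h21 (σ) : D21 σ = crossingCount ν R L σ := by
    rw [hD21, crossingCount_eq_sum_transpose]; simp [ha, L, R]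
  have hC1' : twoC1 = #{i | ν (ν i) = i} := by
    rw [hC1, card_filter_comp_self_eq_sum]; simp only [ha]
  have hC2' : twoC2 = #{p : Fin (2 * n) × Fin (2 * n) | p.1 ≠ p.2 ∧ ν p.1 = ν p.2} := by
    rw [hC2, card_filter_ne_and_apply_eq_sum]; simp only [ha]
  have hcov := covariance_crossingCount ν L R hn (Fintype.card_fin _) hL hR hνne
    (disjoint_filter.2 fun x _ h => not_le.2 h)
  rw [Fintype.card_fin] at hcov
  simp only [h12, h21, Fintype.card_perm, Fintype.card_fin, hN, hC1', hC2']
  exact hcov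

theorem stmt7 (n : ℕ) (hn : 2 ≤ n) (a : Fin (2 * n) → Fin (2 * n) → ℕ)
    (ha01 : ∀ i j, a i j ≤ 1) (hdiag : ∀ i, a i i = 0)
    (hrow : ∀ i, ∑ j, a i j = 1)
    (D12 D21 : Equiv.Perm (Fin (2 * n)) → ℝ)
    (hD12 : ∀ σ, D12 σ = ∑ i, ∑ j, (a i j : ℝ) *
      (if (σ i : ℕ) < n then 1 else 0) * (if n ≤ (σ j : ℕ) then 1 else 0))
    (hD21 : ∀ σ, D21 σ = ∑ i, ∑ j, (a j i : ℝ) *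
      (if (σ i : ℕ) < n then 1 else 0) * (if n ≤ (σ j : ℕ) then 1 else 0))
    (N twoC1 twoC2 : ℝ)
    (hN : N = (2 * n : ℕ))
    (hC1 : twoC1 = ∑ i, ∑ j, (a i j : ℝ) * (a j i : ℝ))
    (hC2 : twoC2 = ∑ i, ∑ l, ∑ j, if i ≠ l then (a i j : ℝ) * (a l j : ℝ) else 0) :
    (∑ σ : Equiv.Perm (Fin (2 * n)), D12 σ * D21 σ) /
        (Fintype.card (Equiv.Perm (Fin (2 * n))) : ℝ) -
      ((∑ σ : Equiv.Perm (Fin (2 * n)), D12 σ) /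
          (Fintype.card (Equiv.Perm (Fin (2 * n))) : ℝ)) *
        ((∑ σ : Equiv.Perm (Fin (2 * n)), D21 σ) /
          (Fintype.card (Equiv.Perm (Fin (2 * n))) : ℝ)) =
    (1 / 16) * (N ^ 2 / (N - 1) - N ^ 2 / (N - 1) ^ 2 +
      (twoC1 - twoC2) * (N * (N - 2) / ((N - 1) * (N - 3)))) :=
  stmt7_general n hn a hdiag hrow D12 D21 hD12 hD21 N twoC1 twoC2 hN hC1 hC2
end

section
/- Let G be a spanning tree on N = 2n vertices with C₃ pairs of edges sharing a common node. Under the uniform random permutation labeling (first n labels = treated), the number R₁ of edges with both endpoints treated satisfies Var(R₁) = (1/(16(N−3)))·( −(N−2)(N−6) + 2C₃·N(N−4)/(N−1) ). -/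
/-!
Write `R₁ = ∑ₑ Xₑ` over the edges `e`, where `Xₑ` indicates that both endpoints of `e` receive
treated labels. A uniform permutation maps a fixed `k`-set into the `n` treated labels with
probability `pₖ = n⁽ᵏ⁾ / N⁽ᵏ⁾` (falling factorials); this probability depends only on `k`, which
gives a recursion in `k` by double counting. Hence `E R₁ = (N - 1) p₂` and
`E R₁² = ∑_{e,f} p_{|e ∪ f|}` with `|e ∪ f| = 4 - |e ∩ f|`. Over ordered pairs of edges,
`∑ |e ∩ f| = ∑ᵥ deg(v)² = 2 C₃ + 2 (N - 1)`, and `|e ∩ f| = 2` exactly on the diagonal; the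
variance formula is then algebra.
-/

open Finset Equiv
open scoped Nat

namespace Equiv.Perm

variable {α : Type*} [Fintype α]

variable (α) in
/-- The probability that a uniformly random permutation of `α` maps a fixed `k`-element set
into `t` (see `card_mapsInto_div_card_perm`). -/
noncomputable def probMapsInto (t : Finset α) (k : ℕ) : ℝ :=
  (#t).descFactorial k / (Fintype.card α).descFactorial k

theorem probMapsInto_eq_prod (t : Finset α) (k : ℕ) :
    probMapsInto α t k = ∏ i ∈ range k, ((#t : ℝ) - i) / (Fintype.card α - i) := by
  simp only [probMapsInto, ← descPochhammer_eval_eq_descFactorial ℝ,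
    descPochhammer_eval_eq_prod_range, prod_div_distrib]

variable [DecidableEq α]

theorem card_mapsInto_eq_of_card_eq {s s' : Finset α} (t : Finset α) (h : #s = #s') :
    #{σ : Perm α | ∀ x ∈ s, σ x ∈ t} = #{σ : Perm α | ∀ x ∈ s', σ x ∈ t} := by
  obtain ⟨τ, rfl⟩ := exists_map_finset_eq s s' h
  refine card_nbij' (· * τ⁻¹) (· * τ) ?_ ?_ ?_ ?_
  all_goals intro σ; simp +contextual [Perm.mul_apply]

/-- Double count the pairs `(i, σ)` with `i ∉ s` and `σ` mapping `insert i s` into `t`: every `i`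
gives the same count, and every `σ` mapping `s` into `t` has exactly `#t - #s` admissible `i`. -/
theorem card_sub_mul_card_mapsInto_insert {s t : Finset α} {j : α} (hj : j ∉ s) :
    (Fintype.card α - #s) * #{σ : Perm α | ∀ x ∈ insert j s, σ x ∈ t} =
      (#t - #s) * #{σ : Perm α | ∀ x ∈ s, σ x ∈ t} := by
  set A : Finset (Perm α) := {σ | ∀ x ∈ s, σ x ∈ t}
  have hfiber : ∀ σ ∈ A, #{i ∈ sᶜ | σ i ∈ t} = #t - #s := by
    intro σ hσ
    have hs : s ⊆ t.map σ.symm.toEmbedding := fun x hx => by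
      simpa using (mem_filter.1 hσ).2 x hx
    rw [← card_map σ.symm.toEmbedding (s := t), ← card_sdiff_of_subset hs]
    congr 1; ext i; simp [and_comm]
  calc (Fintype.card α - #s) * #{σ : Perm α | ∀ x ∈ insert j s, σ x ∈ t}
      = ∑ i ∈ sᶜ, #{σ : Perm α | ∀ x ∈ insert i s, σ x ∈ t} := by
        have hcard : ∀ i ∈ sᶜ, #(insert i s) = #(insert j s) := fun i hi => by
          rw [card_insert_of_notMem (mem_compl.1 hi), card_insert_of_notMem hj]
        rw [sum_congr rfl fun i hi => card_mapsInto_eq_of_card_eq t (hcard i hi), sum_const,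
          card_compl, smul_eq_mul]
    _ = ∑ i ∈ sᶜ, #{σ ∈ A | σ i ∈ t} := by
        refine sum_congr rfl fun i _ => congrArg card ?_
        ext σ; simp [A, and_comm]
    _ = ∑ σ ∈ A, #{i ∈ sᶜ | σ i ∈ t} :=
        sum_card_bipartiteAbove_eq_sum_card_bipartiteBelow _
    _ = (#t - #s) * #A := by rw [sum_congr rfl hfiber, sum_const, smul_eq_mul, mul_comm]

theorem card_mapsInto (s t : Finset α) :
    #{σ : Perm α | ∀ x ∈ s, σ x ∈ t} = (#t).descFactorial #s * (Fintype.card α - #s)! := by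
  induction s using Finset.induction_on with
  | empty => simp [Fintype.card_perm]
  | insert j s hj ih =>
    have hlt : #s < Fintype.card α := card_lt_univ_of_notMem hj
    apply Nat.eq_of_mul_eq_mul_left (Nat.sub_pos_of_lt hlt)
    rw [card_sub_mul_card_mapsInto_insert hj, ih, card_insert_of_notMem hj,
      Nat.descFactorial_succ, show Fintype.card α - #s = Fintype.card α - (#s + 1) + 1 by omega,
      Nat.factorial_succ]
    ring

theorem card_mapsInto_div_card_perm (s t : Finset α) :
    (#{σ : Perm α | ∀ x ∈ s, σ x ∈ t} : ℝ) / Fintype.card (Perm α) = probMapsInto α t #s := by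
  have hfact := Nat.factorial_mul_descFactorial (card_le_univ s)
  have hpos : (0 : ℝ) < (Fintype.card α - #s)! := by positivity
  rw [card_mapsInto, Fintype.card_perm, ← hfact, probMapsInto]
  push_cast
  rw [mul_comm _ ((Fintype.card α - #s)! : ℝ), mul_div_mul_left _ _ hpos.ne']

variable {ι : Type*}

theorem sum_card_filter_mapsInto (E : Finset ι) (b : ι → Finset α) (t : Finset α) :
    ∑ σ : Perm α, #{e ∈ E | ∀ x ∈ b e, σ x ∈ t} =
      ∑ e ∈ E, #{σ : Perm α | ∀ x ∈ b e, σ x ∈ t} :=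
  (sum_card_bipartiteAbove_eq_sum_card_bipartiteBelow _).symm

theorem sum_card_filter_mapsInto_sq (E : Finset ι) (b : ι → Finset α) (t : Finset α) :
    ∑ σ : Perm α, #{e ∈ E | ∀ x ∈ b e, σ x ∈ t} ^ 2 =
      ∑ e ∈ E, ∑ f ∈ E, #{σ : Perm α | ∀ x ∈ b e ∪ b f, σ x ∈ t} := by
  have hsq : ∀ σ : Perm α, #{e ∈ E | ∀ x ∈ b e, σ x ∈ t} ^ 2 =
      #{p ∈ E ×ˢ E | ∀ x ∈ b p.1 ∪ b p.2, σ x ∈ t} := by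
    intro σ
    rw [sq, ← card_product, ← filter_product]
    congr 1
    ext p
    simp [or_imp, forall_and]
  rw [sum_congr rfl fun σ _ => hsq σ, sum_card_filter_mapsInto, sum_product]

end Equiv.Perm

/-- As `#(A ∪ B) = 4 - #(A ∩ B)` with `#(A ∩ B) ∈ {0, 1, 2}`, and `#(A ∩ B) = 2` only for `A = B`,
any function of `#(A ∪ B)` is affine in `#(A ∩ B)` and the indicator of `A = B`. -/
theorem Finset.apply_card_union_of_card_eq_two {α : Type*} [DecidableEq α] {A B : Finset α}
    (hA : #A = 2) (hB : #B = 2) (g : ℕ → ℝ) :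
    g #(A ∪ B) = g 4 + (g 3 - g 4) * #(A ∩ B) + (g 2 - 2 * g 3 + g 4) * if A = B then 1 else 0 := by
  have hunion : #(A ∪ B) = 4 - #(A ∩ B) := by
    have := card_union_add_card_inter A B; omega
  have hle : #(A ∩ B) ≤ 2 := hA ▸ card_le_card inter_subset_left
  have heq : A = B ↔ #(A ∩ B) = 2 := by
    refine ⟨fun h => by rw [h, inter_self, hB], fun h => ?_⟩
    rw [← eq_of_subset_of_card_le inter_subset_left (by omega : #A ≤ #(A ∩ B)),
      eq_of_subset_of_card_le inter_subset_right (by omega : #B ≤ #(A ∩ B))]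
  rw [hunion]
  interval_cases #(A ∩ B) <;> simp [heq]; ring

namespace SimpleGraph

variable {V : Type*} [Fintype V] (G : SimpleGraph V) [DecidableRel G.Adj]

theorem sum_degree_sq :
    ∑ v, (G.degree v : ℝ) ^ 2 = 2 * ∑ v, ((G.degree v).choose 2 : ℝ) + 2 * #G.edgeFinset := by
  have hsum : (2 * #G.edgeFinset : ℝ) = ∑ v, (G.degree v : ℝ) := by
    exact_mod_cast G.sum_degrees_eq_twice_card_edges.symm
  rw [hsum, mul_sum, ← sum_add_distrib]
  refine sum_congr rfl fun v _ => ?_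
  rw [Nat.cast_choose_two]
  ring

variable [DecidableEq V]

theorem sum_sum_ite_adj {M : Type*} [AddCommMonoid M] (f : Sym2 V → M) :
    ∑ i, ∑ j, (if G.Adj i j then f s(i, j) else 0) = 2 • ∑ e ∈ G.edgeFinset, f e := by
  calc ∑ i, ∑ j, (if G.Adj i j then f s(i, j) else 0)
      = ∑ d : G.Dart, f d.edge := by
        have himage : (univ : Finset G.Dart).map ⟨_, Dart.toProd_injective⟩ =
            ({p : V × V | G.Adj p.1 p.2} : Finset (V × V)) := by
          ext p
          simp only [mem_map, mem_univ, true_and, Function.Embedding.coeFn_mk, mem_filter]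
          exact ⟨fun ⟨d, hd⟩ => hd ▸ d.adj, fun h => ⟨⟨p, h⟩, rfl⟩⟩
        rw [← Fintype.sum_prod_type', ← sum_filter, ← himage, sum_map]
        rfl
    _ = ∑ e ∈ G.edgeFinset, ∑ d : G.Dart with d.edge = e, f d.edge :=
        (sum_fiberwise_of_maps_to (fun d _ => mem_edgeFinset.2 d.edge_mem) _).symm
    _ = ∑ e ∈ G.edgeFinset, 2 • f e := by
        refine sum_congr rfl fun e he => ?_
        rw [sum_congr rfl fun d hd => by rw [(mem_filter.1 hd).2], sum_const,
          G.dart_edge_fiber_card e (mem_edgeFinset.1 he)]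
    _ = 2 • ∑ e ∈ G.edgeFinset, f e := (smul_sum ..).symm

theorem sum_sum_card_toFinset_inter :
    ∑ e ∈ G.edgeFinset, ∑ f ∈ G.edgeFinset, #(e.toFinset ∩ f.toFinset) = ∑ v, G.degree v ^ 2 := by
  have hdeg : ∀ v, G.degree v ^ 2 = #{p ∈ G.edgeFinset ×ˢ G.edgeFinset | v ∈ p.1 ∧ v ∈ p.2} := by
    intro v
    rw [← card_incidenceFinset_eq_degree, incidenceFinset_eq_filter, sq, ← card_product,
      ← filter_product]
  have hinter : ∀ e f : Sym2 V, #(e.toFinset ∩ f.toFinset) = #{v | v ∈ e ∧ v ∈ f} := by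
    intro e f
    congr 1; ext v; simp
  simp_rw [hdeg, hinter, ← sum_product']
  exact sum_card_bipartiteAbove_eq_sum_card_bipartiteBelow _

theorem card_toFinset_of_mem_edgeFinset {e : Sym2 V} (he : e ∈ G.edgeFinset) : #e.toFinset = 2 :=
  Sym2.card_toFinset_of_not_isDiag e (G.not_isDiag_of_mem_edgeSet (mem_edgeFinset.1 he))

theorem sum_sum_apply_card_union (g : ℕ → ℝ) :
    ∑ e ∈ G.edgeFinset, ∑ f ∈ G.edgeFinset, g #(e.toFinset ∪ f.toFinset) =
      g 4 * #G.edgeFinset ^ 2 + (g 3 - g 4) * ∑ v, (G.degree v : ℝ) ^ 2 +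
        (g 2 - 2 * g 3 + g 4) * #G.edgeFinset := by
  have hinj : ∀ e f : Sym2 V, e.toFinset = f.toFinset ↔ e = f := fun e f =>
    ⟨fun h => Sym2.ext fun x => by rw [← Sym2.mem_toFinset, h, Sym2.mem_toFinset], congrArg _⟩
  have hinter : ∑ e ∈ G.edgeFinset, ∑ f ∈ G.edgeFinset, (#(e.toFinset ∩ f.toFinset) : ℝ) =
      ∑ v, (G.degree v : ℝ) ^ 2 := by
    exact_mod_cast G.sum_sum_card_toFinset_inter
  rw [sum_congr rfl fun e he => sum_congr rfl fun f hf => Finset.apply_card_union_of_card_eq_two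
    (G.card_toFinset_of_mem_edgeFinset he) (G.card_toFinset_of_mem_edgeFinset hf) g]
  simp only [sum_add_distrib, ← mul_sum, hinter, hinj, Finset.sum_ite_eq, sum_const]
  rw [sum_ite_mem, inter_self, sum_const, nsmul_eq_mul, nsmul_eq_mul, nsmul_eq_mul, mul_one]
  ring

/-- `R₁(σ)` when `t` is the set of treated labels. -/
def numEdgesMapsInto (σ : Perm V) (t : Finset V) : ℕ :=
  #{e ∈ G.edgeFinset | ∀ x ∈ e.toFinset, σ x ∈ t}

theorem sum_sum_ite_adj_mapsInto (σ : Perm V) (t : Finset V) :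
    ∑ i, ∑ j, (if G.Adj i j ∧ σ i ∈ t ∧ σ j ∈ t then (1 : ℝ) else 0) =
      2 * G.numEdgesMapsInto σ t := by
  rw [numEdgesMapsInto, natCast_card_filter, ← Nat.cast_ofNat (R := ℝ) (n := 2), ← nsmul_eq_mul,
    ← sum_sum_ite_adj]
  simp [Sym2.toFinset_mk_eq, ite_and]

theorem sum_numEdgesMapsInto_div (t : Finset V) :
    (∑ σ : Perm V, (G.numEdgesMapsInto σ t : ℝ)) /
        Fintype.card (Perm V) = #G.edgeFinset * Perm.probMapsInto V t 2 := by
  unfold numEdgesMapsInto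
  rw [← Nat.cast_sum, Perm.sum_card_filter_mapsInto, Nat.cast_sum, sum_div, sum_congr rfl
    fun e he => by rw [Perm.card_mapsInto_div_card_perm, G.card_toFinset_of_mem_edgeFinset he]]
  simp

theorem sum_numEdgesMapsInto_sq_div (t : Finset V) :
    (∑ σ : Perm V, (G.numEdgesMapsInto σ t : ℝ) ^ 2) /
        Fintype.card (Perm V) =
      Perm.probMapsInto V t 4 * #G.edgeFinset ^ 2 +
        (Perm.probMapsInto V t 3 - Perm.probMapsInto V t 4) * ∑ v, (G.degree v : ℝ) ^ 2 +
        (Perm.probMapsInto V t 2 - 2 * Perm.probMapsInto V t 3 + Perm.probMapsInto V t 4) *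
          #G.edgeFinset := by
  rw [← sum_sum_apply_card_union]
  unfold numEdgesMapsInto
  simp_rw [← Nat.cast_pow, ← Nat.cast_sum, Perm.sum_card_filter_mapsInto_sq, Nat.cast_sum, sum_div,
    Perm.card_mapsInto_div_card_perm]

end SimpleGraph

theorem stmt15 (n : ℕ) (hn : 3 ≤ n) (G : SimpleGraph (Fin (2 * n)))
    [DecidableRel G.Adj] (hG : G.IsTree)
    (R1 : Equiv.Perm (Fin (2 * n)) → ℝ)
    (hR1 : ∀ σ, R1 σ = (∑ i, ∑ j,
      if G.Adj i j ∧ (σ i : ℕ) < n ∧ (σ j : ℕ) < n then (1 : ℝ) else 0) / 2)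
    (N C3 : ℝ) (hN : N = (2 * n : ℕ))
    (hC3 : C3 = ∑ v, ((G.degree v).choose 2 : ℝ)) :
    (∑ σ : Equiv.Perm (Fin (2 * n)), (R1 σ) ^ 2) /
        (Fintype.card (Equiv.Perm (Fin (2 * n))) : ℝ) -
      ((∑ σ : Equiv.Perm (Fin (2 * n)), R1 σ) /
        (Fintype.card (Equiv.Perm (Fin (2 * n))) : ℝ)) ^ 2 =
    (1 / (16 * (N - 3))) *
      (-((N - 2) * (N - 6)) + 2 * C3 * (N * (N - 4) / (N - 1))) := by
  set t : Finset (Fin (2 * n)) := {x | (x : ℕ) < n}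
  have ht : #t = n := by rw [Fin.card_filter_val_lt]; omega
  have hR : ∀ σ, R1 σ = G.numEdgesMapsInto σ t := by
    intro σ
    rw [hR1, eq_comm, eq_div_iff two_ne_zero, mul_comm _ (2 : ℝ), ← G.sum_sum_ite_adj_mapsInto]
    simp [t]
  have hE : (#G.edgeFinset : ℝ) = 2 * n - 1 := by
    have h := hG.card_edgeFinset
    rw [Fintype.card_fin] at h
    have h' : (#G.edgeFinset : ℝ) + 1 = 2 * n := by exact_mod_cast h
    linarith
  simp only [hR]
  rw [G.sum_numEdgesMapsInto_sq_div, G.sum_numEdgesMapsInto_div, G.sum_degree_sq, ← hC3, hE]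
  simp only [Perm.probMapsInto_eq_prod, ht, Fintype.card_fin, prod_range_succ, prod_range_zero]
  have hn' : (3 : ℝ) ≤ n := by exact_mod_cast hn
  have h1 : (n * 2 - 1 : ℝ) ≠ 0 := by linarith
  have h2 : (n - 1 : ℝ) ≠ 0 := by linarith
  have h3 : (n * 2 - 3 : ℝ) ≠ 0 := by linarith
  rw [hN]
  push_cast
  field_simp
  ring
end
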